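/- arXiv:2510.22012 — 2 statements merged into one kernel-verified Lean document; each statement's English description precedes it below -/
import Mathlib

section
/- The Euler–Lagrange equations ∂L/∂x^k − d/dt(∂L/∂y^k) = 0 with y^k = dx^k/dt, for the least squares Lagrangian L(x,y) = Σ_j(y^j − X^j(x))^2, are equivalent to d²x^k/dt² + 2G^k(x, dx/dt) = 0 for k = 1,…,n, where G^k = −(1/2)[Σ_j (∂X^k/∂x^j − ∂X^j/∂x^k)(dx^j/dt) + Σ_j (∂X^j/∂x^k) X^j(x)]. -/
/-! Along the curve, `∂L/∂yᵏ = 2(ẋᵏ - Xᵏ(x))`, whose time derivative is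
`2(ẍᵏ - Σⱼ ∂ⱼXᵏ ẋʲ)`, while `∂L/∂xᵏ = -2 Σⱼ (ẋʲ - Xʲ(x)) ∂ₖXʲ`. Collecting terms, the
Euler–Lagrange expression is exactly `-2 (ẍᵏ + 2Gᵏ(x, ẋ))`, so one vanishes iff the other does. -/

/-- Partial derivative of a scalar function on ℝⁿ in the k-th coordinate direction. -/
noncomputable def pd {n : ℕ} (k : Fin n) (f : (Fin n → ℝ) → ℝ) (x : Fin n → ℝ) : ℝ :=
  fderiv ℝ f x (Pi.single k 1)

open Finset

section PartialDerivatives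

variable {n : ℕ}

lemma fderiv_apply_eq_sum_pd (f : (Fin n → ℝ) → ℝ) (x v : Fin n → ℝ) :
    fderiv ℝ f x v = ∑ j, v j * pd j f x := by
  conv_lhs => rw [pi_eq_sum_univ v, map_sum]
  refine sum_congr rfl fun j _ => ?_
  simp only [map_smul, smul_eq_mul, pd]
  congr 2
  ext i
  simp [Pi.single_apply, eq_comm]

lemma pd_sum_sq {ι : Type*} [Fintype ι] (g : ι → (Fin n → ℝ) → ℝ) (x : Fin n → ℝ) (k : Fin n)
    (hg : ∀ j, DifferentiableAt ℝ (g j) x) :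
    pd k (fun x' => ∑ j, g j x' ^ 2) x = ∑ j, 2 * g j x * pd k (g j) x := by
  have hsq : ∀ j, HasFDerivAt (fun x' => g j x' ^ 2) ((2 * g j x) • fderiv ℝ (g j) x) x :=
    fun j => by simpa using (hg j).hasFDerivAt.pow 2
  rw [pd, (HasFDerivAt.fun_sum fun j _ => hsq j).fderiv]
  simp [pd]

lemma pd_apply_sub_const (c y : Fin n → ℝ) (j k : Fin n) :
    pd k (fun y' => y' j - c j) y = (Pi.single k (1 : ℝ) : Fin n → ℝ) j := by
  rw [pd, ((hasFDerivAt_apply j y).sub_const (c j)).fderiv]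
  rfl

lemma pd_const_sub (f : (Fin n → ℝ) → ℝ) (a : ℝ) (x : Fin n → ℝ) (k : Fin n) :
    pd k (fun x' => a - f x') x = -pd k f x := by
  simp [pd, fderiv_const_sub]

end PartialDerivatives

section LeastSquares

variable {n : ℕ}

def leastSquaresLagrangian (X : (Fin n → ℝ) → (Fin n → ℝ)) (x y : Fin n → ℝ) : ℝ :=
  ∑ j, (y j - X x j) ^ 2

noncomputable def geodesicSprayCoeff (X : (Fin n → ℝ) → (Fin n → ℝ)) (k : Fin n)
    (x y : Fin n → ℝ) : ℝ :=
  -(1 / 2) * ((∑ j, (pd j (fun x' => X x' k) x - pd k (fun x' => X x' j) x) * y j)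
    + ∑ j, pd k (fun x' => X x' j) x * X x j)

noncomputable def eulerLagrangeOperator (L : (Fin n → ℝ) → (Fin n → ℝ) → ℝ)
    (x : ℝ → (Fin n → ℝ)) (k : Fin n) (t : ℝ) : ℝ :=
  pd k (fun x' => L x' (deriv x t)) (x t)
    - deriv (fun s => pd k (fun y' => L (x s) y') (deriv x s)) t

variable (X : (Fin n → ℝ) → (Fin n → ℝ))

lemma pd_velocity_leastSquaresLagrangian (x y : Fin n → ℝ) (k : Fin n) :
    pd k (leastSquaresLagrangian X x) y = 2 * (y k - X x k) := by
  have hdiff : ∀ j, DifferentiableAt ℝ (fun y' : Fin n → ℝ => y' j - X x j) y := fun j => by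
    fun_prop
  change pd k (fun y' => ∑ j, (y' j - X x j) ^ 2) y = _
  rw [pd_sum_sq _ y k hdiff]
  simp [pd_apply_sub_const, Pi.single_apply]

lemma pd_position_leastSquaresLagrangian {x : Fin n → ℝ} (hX : DifferentiableAt ℝ X x)
    (y : Fin n → ℝ) (k : Fin n) :
    pd k (fun x' => leastSquaresLagrangian X x' y) x
      = -2 * ∑ j, (y j - X x j) * pd k (fun x' => X x' j) x := by
  have hdiff : ∀ j, DifferentiableAt ℝ (fun x' => y j - X x' j) x := fun j =>
    (differentiableAt_pi.mp hX j).const_sub _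
  simp only [leastSquaresLagrangian]
  rw [pd_sum_sq _ x k hdiff, mul_sum]
  refine sum_congr rfl fun j _ => ?_
  rw [pd_const_sub]
  ring

lemma hasDerivAt_comp_curve_apply {x : ℝ → (Fin n → ℝ)} {t : ℝ}
    (hX : DifferentiableAt ℝ X (x t)) (hx : DifferentiableAt ℝ x t) (k : Fin n) :
    HasDerivAt (fun s => X (x s) k) (∑ j, deriv x t j * pd j (fun x' => X x' k) (x t)) t := by
  rw [← fderiv_apply_eq_sum_pd]
  exact (differentiableAt_pi.mp hX k).hasFDerivAt.comp_hasDerivAt t hx.hasDerivAt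

lemma eulerLagrangeOperator_leastSquaresLagrangian (hX : Differentiable ℝ X)
    {x : ℝ → (Fin n → ℝ)} (hx : Differentiable ℝ x) (hx' : Differentiable ℝ (deriv x))
    (k : Fin n) (t : ℝ) :
    eulerLagrangeOperator (leastSquaresLagrangian X) x k t
      = -2 * (deriv (deriv x) t k + 2 * geodesicSprayCoeff X k (x t) (deriv x t)) := by
  have hmomentum : HasDerivAt (fun s => pd k (leastSquaresLagrangian X (x s)) (deriv x s))
      (2 * (deriv (deriv x) t k - ∑ j, deriv x t j * pd j (fun x' => X x' k) (x t))) t := by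
    simp only [pd_velocity_leastSquaresLagrangian]
    exact (((hasDerivAt_pi.mp (hx' t).hasDerivAt) k).sub
      (hasDerivAt_comp_curve_apply X (hX _) (hx t) k)).const_mul 2
  rw [eulerLagrangeOperator, pd_position_leastSquaresLagrangian X (hX _), hmomentum.deriv,
    geodesicSprayCoeff]
  simp only [sub_mul, sum_sub_distrib, mul_comm (pd _ _ _) (deriv x t _),
    mul_comm (pd _ _ _) (X (x t) _)]
  ring

end LeastSquares

/-- For the least squares Lagrangian L(x,y) = Σⱼ (yʲ − Xʲ(x))², the
Euler–Lagrange equations ∂L/∂xᵏ − d/dt(∂L/∂yᵏ) = 0 along a C² curve (with yᵏ = dxᵏ/dt)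
are equivalent to d²xᵏ/dt² + 2Gᵏ(x, dx/dt) = 0 for all k, where
Gᵏ = −(1/2)[Σⱼ (∂Xᵏ/∂xʲ − ∂Xʲ/∂xᵏ)yʲ + Σⱼ (∂Xʲ/∂xᵏ) Xʲ]. -/
theorem euler_lagrange_iff_geodesic_form
    (n : ℕ) (X : (Fin n → ℝ) → (Fin n → ℝ)) (hX : ContDiff ℝ 2 X)
    (L : (Fin n → ℝ) → (Fin n → ℝ) → ℝ)
    (hL : ∀ x y, L x y = ∑ j, (y j - X x j) ^ 2)
    (G : Fin n → (Fin n → ℝ) → (Fin n → ℝ) → ℝ)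
    (hG : ∀ k x y, G k x y =
      -(1 / 2) * ((∑ j, (pd j (fun x' => X x' k) x - pd k (fun x' => X x' j) x) * y j)
        + ∑ j, pd k (fun x' => X x' j) x * X x j))
    (x : ℝ → (Fin n → ℝ)) (hx : ContDiff ℝ 2 x) :
    (∀ k t, pd k (fun x' => L x' (deriv x t)) (x t)
        - deriv (fun s => pd k (fun y' => L (x s) y') (deriv x s)) t = 0)
      ↔ (∀ k t, deriv (deriv x) t k + 2 * G k (x t) (deriv x t) = 0) := by
  obtain rfl : L = leastSquaresLagrangian X := funext₂ hL
  obtain rfl : G = geodesicSprayCoeff X := funext₃ hG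
  have hx' : ContDiff ℝ 1 (deriv x) := hx.deriv' (n := 1)
  have key := eulerLagrangeOperator_leastSquaresLagrangian X (hX.differentiable two_ne_zero)
    (hx.differentiable two_ne_zero) (hx'.differentiable one_ne_zero)
  change (∀ k t, eulerLagrangeOperator _ x k t = 0) ↔ _
  simp only [key, mul_eq_zero, neg_eq_zero, two_ne_zero, false_or]
end

section
/- For the COVID-19 system, the Yang–Mills electromagnetic-like energy equals EYM = (N^1_2)² + (N^1_3)² + (N^1_4)² + (N^1_5)² + (N^1_6)² + (N^2_3)² + (N^2_4)² + (N^2_5)² + (N^2_6)² + (1/4)(φ_s² + γ_s² + γ_a² + γ_h²), where N^i_j are the entries of N = −(1/2)(J − J^t); in particular EYM ≥ (1/4)(φ_s² + γ_s² + γ_a² + γ_h²) at every point of the domain. -/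
/-- The COVID-19 vector field on ℝ⁶, coordinates (x⁰,…,x⁵) = (S,E,Iₛ,Iₐ,I_h,R). -/
noncomputable def covidX (βs βa βh σ r φs γs γa γh δs δh : ℝ)
    (x : Fin 6 → ℝ) : Fin 6 → ℝ :=
  let S := x 0; let E := x 1; let Is := x 2; let Ia := x 3; let Ih := x 4; let R := x 5
  let lam := (βs * Is + βa * Ia + βh * Ih) / (S + E + Is + Ia + Ih + R)
  ![-lam * S, lam * S - σ * E, (1 - r) * σ * E - (φs + γs + δs) * Is,
    r * σ * E - γa * Ia, φs * Is - (γh + δh) * Ih, γs * Is + γa * Ia + γh * Ih]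

/-- The Jacobian matrix of the COVID-19 vector field. -/
noncomputable def covidJ (βs βa βh σ r φs γs γa γh δs δh : ℝ)
    (x : Fin 6 → ℝ) : Matrix (Fin 6) (Fin 6) ℝ :=
  fun i j =>
    fderiv ℝ (fun x' => covidX βs βa βh σ r φs γs γa γh δs δh x' i) x (Pi.single j 1)

/-!
Rows `Iₛ, Iₐ, I_h, R` of the vector field are linear in the state (the incidence term `λ`
enters only the `S` and `E` rows), so the corresponding Jacobian entries are the constant
coefficients, and the lower-right `4 × 4` block of `N` is `φₛ/2, γₛ/2, γₐ/2, γ_h/2` above the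
diagonal. For the skew matrix `F = -N`, `(1/2) tr (F Fᵀ)` is the sum of the squares of the
entries above the diagonal.
-/

open scoped Matrix

theorem fderiv_sum_mul_apply_single {𝕜 ι : Type*} [NontriviallyNormedField 𝕜] [Fintype ι]
    [DecidableEq ι] (c : ι → 𝕜) (x : ι → 𝕜) (j : ι) :
    fderiv 𝕜 (fun y : ι → 𝕜 => ∑ k, c k * y k) x (Pi.single j 1) = c j := by
  have hlin : (fun y : ι → 𝕜 => ∑ k, c k * y k)
      = ⇑(∑ k, c k • ContinuousLinearMap.proj k : (ι → 𝕜) →L[𝕜] 𝕜) := by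
    ext y
    simp
  rw [hlin, ContinuousLinearMap.fderiv]
  simp [Pi.single_apply]

theorem Matrix.half_trace_mul_transpose_of_transpose_eq_neg (A : Matrix (Fin 6) (Fin 6) ℝ)
    (hA : Aᵀ = -A) :
    (1 / 2) * (A * Aᵀ).trace = A 0 1 ^ 2 + A 0 2 ^ 2 + A 0 3 ^ 2 + A 0 4 ^ 2 + A 0 5 ^ 2
      + A 1 2 ^ 2 + A 1 3 ^ 2 + A 1 4 ^ 2 + A 1 5 ^ 2 + A 2 3 ^ 2 + A 2 4 ^ 2 + A 2 5 ^ 2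
      + A 3 4 ^ 2 + A 3 5 ^ 2 + A 4 5 ^ 2 := by
  have hskew (i j : Fin 6) : A j i = -A i j := by simpa using congrFun (congrFun hA i) j
  have hdiag (i : Fin 6) : A i i = 0 := by linarith [hskew i i]
  simp only [Matrix.trace, Matrix.diag, Matrix.mul_apply, Matrix.transpose_apply,
    Fin.sum_univ_six, hdiag]
  rw [hskew 0 1, hskew 0 2, hskew 0 3, hskew 0 4, hskew 0 5, hskew 1 2, hskew 1 3,
    hskew 1 4, hskew 1 5, hskew 2 3, hskew 2 4, hskew 2 5, hskew 3 4, hskew 3 5, hskew 4 5]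
  ring

theorem covidJ_apply_of_linear {βs βa βh σ r φs γs γa γh δs δh : ℝ} {i : Fin 6} {c : Fin 6 → ℝ}
    (hc : (fun y => covidX βs βa βh σ r φs γs γa γh δs δh y i) = fun y => ∑ k, c k * y k)
    (x : Fin 6 → ℝ) (j : Fin 6) :
    covidJ βs βa βh σ r φs γs γa γh δs δh x i j = c j := by
  rw [covidJ, hc, fderiv_sum_mul_apply_single]

section

variable (βs βa βh σ r φs γs γa γh δs δh : ℝ)

theorem covidX_two : (fun y => covidX βs βa βh σ r φs γs γa γh δs δh y 2)
    = fun y => ∑ k, ![0, (1 - r) * σ, -(φs + γs + δs), 0, 0, 0] k * y k := by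
  funext y
  simp only [covidX, Fin.sum_univ_six, Matrix.cons_val, Matrix.cons_val_zero,
    Matrix.cons_val_one]
  ring

theorem covidX_three : (fun y => covidX βs βa βh σ r φs γs γa γh δs δh y 3)
    = fun y => ∑ k, ![0, r * σ, 0, -γa, 0, 0] k * y k := by
  funext y
  simp only [covidX, Fin.sum_univ_six, Matrix.cons_val, Matrix.cons_val_zero,
    Matrix.cons_val_one]
  ring

theorem covidX_four : (fun y => covidX βs βa βh σ r φs γs γa γh δs δh y 4)
    = fun y => ∑ k, ![0, 0, φs, 0, -(γh + δh), 0] k * y k := by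
  funext y
  simp only [covidX, Fin.sum_univ_six, Matrix.cons_val, Matrix.cons_val_zero,
    Matrix.cons_val_one]
  ring

theorem covidX_five : (fun y => covidX βs βa βh σ r φs γs γa γh δs δh y 5)
    = fun y => ∑ k, ![0, 0, γs, γa, γh, 0] k * y k := by
  funext y
  simp only [covidX, Fin.sum_univ_six, Matrix.cons_val, Matrix.cons_val_zero,
    Matrix.cons_val_one]
  ring

theorem covidJ_sub_transpose_lower_block (x : Fin 6 → ℝ) :
    let J := covidJ βs βa βh σ r φs γs γa γh δs δh x
    J 2 3 - J 3 2 = 0 ∧ J 2 4 - J 4 2 = -φs ∧ J 2 5 - J 5 2 = -γs ∧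
      J 3 4 - J 4 3 = 0 ∧ J 3 5 - J 5 3 = -γa ∧ J 4 5 - J 5 4 = -γh := by
  simp only [covidJ_apply_of_linear (covidX_two ..) x,
    covidJ_apply_of_linear (covidX_three ..) x,
    covidJ_apply_of_linear (covidX_four ..) x,
    covidJ_apply_of_linear (covidX_five ..) x]
  simp [Matrix.cons_val]

end

/-- For the COVID-19 system, the Yang–Mills electromagnetic-like energy
EYM = (1/2)Trace(F Fᵀ), F = −N, N = −(1/2)(J − Jᵀ), equals
(N¹₂)²+(N¹₃)²+(N¹₄)²+(N¹₅)²+(N¹₆)²+(N²₃)²+(N²₄)²+(N²₅)²+(N²₆)²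
+ (1/4)(φₛ²+γₛ²+γₐ²+γ_h²) (1-based indices); in particular
EYM ≥ (1/4)(φₛ²+γₛ²+γₐ²+γ_h²) at every point of the domain. -/
theorem covid_yang_mills_energy
    (βs βa βh σ r φs γs γa γh δs δh : ℝ)
    (Nc : (Fin 6 → ℝ) → Matrix (Fin 6) (Fin 6) ℝ)
    (hNc : ∀ x i j, Nc x i j =
      -(1 / 2) * (covidJ βs βa βh σ r φs γs γa γh δs δh x i j
        - covidJ βs βa βh σ r φs γs γa γh δs δh x j i))
    (F : (Fin 6 → ℝ) → Matrix (Fin 6) (Fin 6) ℝ) (hF : ∀ x, F x = -(Nc x))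
    (EYM : (Fin 6 → ℝ) → ℝ)
    (hEYM : ∀ x, EYM x = (1 / 2) * Matrix.trace (F x * (F x).transpose)) :
    ∀ x : Fin 6 → ℝ, x 0 + x 1 + x 2 + x 3 + x 4 + x 5 ≠ 0 →
      EYM x = (Nc x 0 1) ^ 2 + (Nc x 0 2) ^ 2 + (Nc x 0 3) ^ 2 + (Nc x 0 4) ^ 2
          + (Nc x 0 5) ^ 2 + (Nc x 1 2) ^ 2 + (Nc x 1 3) ^ 2 + (Nc x 1 4) ^ 2
          + (Nc x 1 5) ^ 2 + (1 / 4) * (φs ^ 2 + γs ^ 2 + γa ^ 2 + γh ^ 2) ∧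
        (1 / 4) * (φs ^ 2 + γs ^ 2 + γa ^ 2 + γh ^ 2) ≤ EYM x := by
  intro x _
  suffices henergy : EYM x = (Nc x 0 1) ^ 2 + (Nc x 0 2) ^ 2 + (Nc x 0 3) ^ 2 + (Nc x 0 4) ^ 2
      + (Nc x 0 5) ^ 2 + (Nc x 1 2) ^ 2 + (Nc x 1 3) ^ 2 + (Nc x 1 4) ^ 2
      + (Nc x 1 5) ^ 2 + (1 / 4) * (φs ^ 2 + γs ^ 2 + γa ^ 2 + γh ^ 2) by
    exact ⟨henergy, henergy ▸ le_add_of_nonneg_left (by positivity)⟩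
  have hskew : (Nc x)ᵀ = -Nc x := by
    ext i j
    simp only [Matrix.transpose_apply, Matrix.neg_apply, hNc]
    ring
  obtain ⟨h23, h24, h25, h34, h35, h45⟩ :=
    covidJ_sub_transpose_lower_block βs βa βh σ r φs γs γa γh δs δh x
  rw [hEYM, hF, Matrix.transpose_neg, neg_mul_neg,
    Matrix.half_trace_mul_transpose_of_transpose_eq_neg _ hskew,
    hNc x 2 3, hNc x 2 4, hNc x 2 5, hNc x 3 4, hNc x 3 5, hNc x 4 5,
    h23, h24, h25, h34, h35, h45]
  ring
end
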